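/- Let k be a field and B = B_{n,m} a bipath poset. Every B-persistence module V is interval-decomposable; that is, there exist nonnegative integers m(J) indexed by the intervals J of B such that V is isomorphic to the direct sum over all intervals J∈𝕀(B) of m(J) copies of the interval module k_J. -/

import Mathlib

open Classical

/-- A persistence module over a poset `P` with coefficients in a field `k`. -/
structure PersMod (k : Type) [Field k] (P : Type) [PartialOrder P] : Type 1 where
  V : P → Type
  [instAddCommGroup : ∀ a, AddCommGroup (V a)]
  [instModule : ∀ a, Module k (V a)]
  [instFinDim : ∀ a, FiniteDimensional k (V a)]
  map : ∀ {a b : P}, a ≤ b → (V a →ₗ[k] V b)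
  map_id : ∀ a : P, map (le_refl a) = LinearMap.id
  map_comp : ∀ {a b c : P} (hab : a ≤ b) (hbc : b ≤ c),
      map (le_trans hab hbc) = (map hbc).comp (map hab)

attribute [instance] PersMod.instAddCommGroup PersMod.instModule PersMod.instFinDim

variable {k : Type} [Field k] {P : Type} [PartialOrder P]

/-- The submodule of natural transformations inside the product of all hom spaces. -/
def PersMod.homSubmodule (M N : PersMod k P) :
    Submodule k (∀ a : P, M.V a →ₗ[k] N.V a) where
  carrier := {F | ∀ (a b : P) (h : a ≤ b), (F b).comp (M.map h) = (N.map h).comp (F a)}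
  add_mem' := by
    intro f g hf hg a b h
    simp only [Pi.add_apply, LinearMap.add_comp, LinearMap.comp_add, hf a b h, hg a b h]
  zero_mem' := by
    intro a b h
    simp
  smul_mem' := by
    intro c f hf a b h
    simp only [Pi.smul_apply, LinearMap.smul_comp, LinearMap.comp_smul, hf a b h]

/-- Morphisms of persistence modules. -/
abbrev PersHom (M N : PersMod k P) := ↥(PersMod.homSubmodule M N)

/-- Isomorphism of persistence modules. -/
def PersMod.Iso (M N : PersMod k P) : Prop :=
  ∃ f : PersHom M N, ∀ a : P, Function.Bijective (f.1 a)

/-- Identity morphism. -/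
def persId (M : PersMod k P) : PersHom M M :=
  ⟨fun _ => LinearMap.id, fun a b h => by simp⟩

/-- Composition of morphisms of persistence modules. -/
def persComp {M N O : PersMod k P} (f : PersHom M N) (g : PersHom N O) : PersHom M O :=
  ⟨fun a => (g.1 a).comp (f.1 a), fun a b h => by
    rw [LinearMap.comp_assoc, f.2 a b h, ← LinearMap.comp_assoc, g.2 a b h,
      LinearMap.comp_assoc]⟩

/-- Finite direct sums of persistence modules. -/
def PersMod.dsum {ι : Type} [Finite ι] (M : ι → PersMod k P) : PersMod k P where
  V a := ∀ i, (M i).V a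
  map h := LinearMap.pi fun i => ((M i).map h).comp (LinearMap.proj i)
  map_id a := by
    ext x i
    simp [PersMod.map_id]
  map_comp hab hbc := by
    apply LinearMap.ext
    intro x
    funext i
    simp only [LinearMap.pi_apply, LinearMap.coe_comp, Function.comp_apply,
      LinearMap.proj_apply]
    rw [(M i).map_comp hab hbc]
    simp

/-- Binary direct sum of persistence modules. -/
def PersMod.prod (M N : PersMod k P) : PersMod k P where
  V a := M.V a × N.V a
  map h := (M.map h).prodMap (N.map h)
  map_id a := by
    ext x <;> simp [PersMod.map_id]
  map_comp hab hbc := by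
    apply LinearMap.ext
    intro x
    try dsimp only
    rw [M.map_comp hab hbc, N.map_comp hab hbc]
    simp

/-- Restriction of a persistence module along a monotone map. -/
def PersMod.comap {Q : Type} [PartialOrder Q] (f : Q →o P) (V : PersMod k P) :
    PersMod k Q where
  V a := V.V (f a)
  map h := V.map (f.monotone h)
  map_id a := V.map_id (f a)
  map_comp hab hbc := V.map_comp (f.monotone hab) (f.monotone hbc)

/-- The sub-persistence module determined by a family of submodules preserved by the
structure maps. -/
def PersMod.sub (W : PersMod k P) (S : ∀ a : P, Submodule k (W.V a))
    (hS : ∀ {a b : P} (h : a ≤ b), ∀ x ∈ S a, W.map h x ∈ S b) : PersMod k P where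
  V a := ↥(S a)
  map h := (W.map h).restrict (hS h)
  map_id a := by
    apply LinearMap.ext
    intro x
    apply Subtype.ext
    simp [LinearMap.restrict_apply, W.map_id]
  map_comp hab hbc := by
    apply LinearMap.ext
    intro x
    apply Subtype.ext
    simp only [LinearMap.restrict_apply, LinearMap.coe_comp, Function.comp_apply]
    rw [W.map_comp hab hbc]
    simp

/-- Convexity of a subset of a poset. -/
def IsConvex (I : Set P) : Prop :=
  ∀ ⦃a b z : P⦄, a ∈ I → b ∈ I → a ≤ z → z ≤ b → z ∈ I

/-- Connectivity of a subset of a poset: any two points are joined by a finite sequence of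
consecutively comparable points inside the subset. -/
def IsConnectedSet (I : Set P) : Prop :=
  ∀ ⦃a⦄, a ∈ I → ∀ ⦃b⦄, b ∈ I →
    Relation.ReflTransGen (fun x y => x ∈ I ∧ y ∈ I ∧ (x ≤ y ∨ y ≤ x)) a b

/-- An interval of a poset: a nonempty convex connected subset. -/
def IsInterval (I : Set P) : Prop :=
  I.Nonempty ∧ IsConvex I ∧ IsConnectedSet I

/-- The interval module `k_I` attached to a convex subset `I`. -/
noncomputable def intervalModule (k : Type) [Field k] {P : Type} [PartialOrder P] (I : Set P)
    (hI : IsConvex I) : PersMod k P where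
  V a := PLift (a ∈ I) → k
  map {a b} _ :=
    { toFun := fun f _ => if ha : a ∈ I then f ⟨ha⟩ else 0
      map_add' := fun f g => by
        funext hb
        by_cases ha : a ∈ I <;> simp [ha]
      map_smul' := fun c f => by
        funext hb
        by_cases ha : a ∈ I <;> simp [ha] }
  map_id a := by
    apply LinearMap.ext
    intro f
    funext hb
    simp only [LinearMap.coe_mk, AddHom.coe_mk, LinearMap.id_coe, id_eq]
    rw [dif_pos hb.down]
  map_comp {a b c} hab hbc := by
    apply LinearMap.ext
    intro f
    funext hc
    by_cases ha : a ∈ I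
    · have hb : b ∈ I := hI ha hc.down hab hbc
      simp only [LinearMap.coe_comp, Function.comp_apply, LinearMap.coe_mk, AddHom.coe_mk,
        dif_pos ha, dif_pos hb]
    · simp only [LinearMap.coe_comp, Function.comp_apply, LinearMap.coe_mk, AddHom.coe_mk,
        dif_neg ha]
      by_cases hb : b ∈ I <;> simp [hb, dif_neg ha]
/-- The underlying type of the bipath poset `B_{n,m}`:
a global minimum `bot = 0̂`, an upper path `1, …, n`, a lower path `1', …, m'`,
and a global maximum `top = 1̂`. -/
inductive Bipath (n m : ℕ) : Type where
  | bot : Bipath n m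
  | up : Fin n → Bipath n m
  | down : Fin m → Bipath n m
  | top : Bipath n m
deriving DecidableEq

namespace Bipath

variable {n m : ℕ}

/-- Auxiliary embedding of the bipath poset into `ℕ × ℕ` (with the product order),
used to define its partial order, which is generated by
`0̂ < 1 < ⋯ < n < 1̂` and `0̂ < 1' < ⋯ < m' < 1̂`. -/
def toPair : Bipath n m → ℕ × ℕ
  | .bot => (0, 0)
  | .up i => (i.1 + 1, 0)
  | .down j => (0, j.1 + 1)
  | .top => (n + 1, m + 1)

theorem toPair_injective : Function.Injective (toPair (n := n) (m := m)) := by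
  intro x y h
  cases x <;> cases y <;>
    simp only [toPair, Prod.mk.injEq] at h <;>
    first
      | rfl
      | (exact absurd h (by omega))
      | (obtain ⟨h1, h2⟩ := h; congr 1; exact Fin.ext (by omega))

instance : PartialOrder (Bipath n m) := PartialOrder.lift toPair toPair_injective

theorem le_iff_toPair {x y : Bipath n m} : x ≤ y ↔ toPair x ≤ toPair y := Iff.rfl

theorem bot_le' (x : Bipath n m) : (Bipath.bot : Bipath n m) ≤ x := by
  rw [le_iff_toPair, Prod.le_def]
  exact ⟨Nat.zero_le _, Nat.zero_le _⟩

theorem le_top' (x : Bipath n m) : x ≤ (Bipath.top : Bipath n m) := by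
  rw [le_iff_toPair, Prod.le_def]
  cases x with
  | bot => exact ⟨Nat.zero_le _, Nat.zero_le _⟩
  | up i => have := i.isLt; exact ⟨by simp only [toPair]; omega, by simp only [toPair]; omega⟩
  | down j => have := j.isLt; exact ⟨by simp only [toPair]; omega, by simp only [toPair]; omega⟩
  | top => exact ⟨le_refl _, le_refl _⟩

theorem up_le_up {i j : Fin n} : (Bipath.up i : Bipath n m) ≤ .up j ↔ i ≤ j := by
  rw [le_iff_toPair, Prod.le_def]
  simp only [toPair, Fin.le_def]
  omega

theorem down_le_down {i j : Fin m} : (Bipath.down i : Bipath n m) ≤ .down j ↔ i ≤ j := by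
  rw [le_iff_toPair, Prod.le_def]
  simp only [toPair, Fin.le_def]
  omega

theorem not_up_le_down {i : Fin n} {j : Fin m} : ¬ (Bipath.up i : Bipath n m) ≤ .down j := by
  rw [le_iff_toPair, Prod.le_def]
  simp only [toPair]
  omega

theorem not_down_le_up {j : Fin m} {i : Fin n} : ¬ (Bipath.down j : Bipath n m) ≤ .up i := by
  rw [le_iff_toPair, Prod.le_def]
  simp only [toPair]
  omega

theorem not_up_le_bot {i : Fin n} : ¬ (Bipath.up i : Bipath n m) ≤ .bot := by
  rw [le_iff_toPair, Prod.le_def]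
  simp only [toPair]
  omega

theorem not_down_le_bot {j : Fin m} : ¬ (Bipath.down j : Bipath n m) ≤ .bot := by
  rw [le_iff_toPair, Prod.le_def]
  simp only [toPair]
  omega

theorem not_top_le_bot : ¬ (Bipath.top : Bipath n m) ≤ .bot := by
  rw [le_iff_toPair, Prod.le_def]
  simp only [toPair]
  omega

theorem not_top_le_up {i : Fin n} : ¬ (Bipath.top : Bipath n m) ≤ .up i := by
  rw [le_iff_toPair, Prod.le_def]
  simp only [toPair]
  omega

theorem not_top_le_down {j : Fin m} : ¬ (Bipath.top : Bipath n m) ≤ .down j := by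
  rw [le_iff_toPair, Prod.le_def]
  simp only [toPair]
  omega

instance : Finite (Bipath n m) := by
  apply Finite.of_surjective
    (fun x : (Unit ⊕ Fin n) ⊕ (Fin m ⊕ Unit) =>
      match x with
      | .inl (.inl _) => (Bipath.bot : Bipath n m)
      | .inl (.inr i) => .up i
      | .inr (.inl j) => .down j
      | .inr (.inr _) => .top)
  intro b
  cases b with
  | bot => exact ⟨.inl (.inl ()), rfl⟩
  | up i => exact ⟨.inl (.inr i), rfl⟩
  | down j => exact ⟨.inr (.inl j), rfl⟩
  | top => exact ⟨.inr (.inr ()), rfl⟩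

end Bipath

section Infra

variable {k : Type} [Field k] {P : Type} [PartialOrder P]

theorem intervalModule_subsingleton {I : Set P} (hI : IsConvex I) {a : P} (ha : a ∉ I) :
    Subsingleton ((intervalModule k I hI).V a) :=
  ⟨fun f g => funext fun x => absurd x.down ha⟩

/-- evaluation-and-scale map used for embeddings -/
noncomputable def embComp {I : Set P} (hI : IsConvex I) (V : PersMod k P)
    (x : ∀ a, V.V a) (a : P) (ha : a ∈ I) :
    (intervalModule k I hI).V a →ₗ[k] V.V a where
  toFun g := g ⟨ha⟩ • x a
  map_add' f g := by
    show (f + g) ⟨ha⟩ • x a = f ⟨ha⟩ • x a + g ⟨ha⟩ • x a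
    rw [show (f + g) ⟨ha⟩ = f ⟨ha⟩ + g ⟨ha⟩ from rfl, add_smul]
  map_smul' c f := by
    show (c • f) ⟨ha⟩ • x a = (RingHom.id k c) • (f ⟨ha⟩ • x a)
    rw [show (c • f) ⟨ha⟩ = c * f ⟨ha⟩ from rfl, RingHom.id_apply, mul_smul]

/-- constant-functional map used for retractions -/
noncomputable def retComp {I : Set P} (hI : IsConvex I) (V : PersMod k P)
    (lam : ∀ a, V.V a →ₗ[k] k) (a : P) (ha : a ∈ I) :
    V.V a →ₗ[k] (intervalModule k I hI).V a where
  toFun v := fun _ => lam a v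
  map_add' v w := by funext p; show lam a (v + w) = lam a v + lam a w; rw [map_add]
  map_smul' c v := by
    funext p
    show lam a (c • v) = c * lam a v
    rw [map_smul]; rfl

theorem intervalModule_map_apply {I : Set P} (hI : IsConvex I) {a b : P} (h : a ≤ b)
    (g : (intervalModule k I hI).V a) (p : PLift (b ∈ I)) :
    (intervalModule k I hI).map h g p = if ha : a ∈ I then g ⟨ha⟩ else 0 := rfl

/-- Build a morphism from an interval module into `V` from a compatible family. -/
noncomputable def mkEmb {I : Set P} (hI : IsConvex I) (V : PersMod k P)
    (x : ∀ a, V.V a)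
    (h1 : ∀ a ∈ I, ∀ b ∈ I, ∀ h : a ≤ b, V.map h (x a) = x b)
    (h2 : ∀ a ∈ I, ∀ b, b ∉ I → ∀ h : a ≤ b, V.map h (x a) = 0) :
    PersHom (intervalModule k I hI) V := by
  refine ⟨fun a => if ha : a ∈ I then embComp hI V x a ha else 0, ?_⟩
  intro a b h
  apply LinearMap.ext; intro g
  simp only [LinearMap.coe_comp, Function.comp_apply]
  by_cases ha : a ∈ I
  · rw [dif_pos ha]
    by_cases hb : b ∈ I
    · rw [dif_pos hb]
      show ((intervalModule k I hI).map h g) ⟨hb⟩ • x b = V.map h (g ⟨ha⟩ • x a)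
      rw [intervalModule_map_apply, dif_pos ha, map_smul, h1 a ha b hb h]
    · rw [dif_neg hb, LinearMap.zero_apply]
      show (0 : V.V b) = V.map h (g ⟨ha⟩ • x a)
      rw [map_smul, h2 a ha b hb h, smul_zero]
  · rw [dif_neg ha, LinearMap.zero_apply, map_zero]
    by_cases hb : b ∈ I
    · rw [dif_pos hb]
      show ((intervalModule k I hI).map h g) ⟨hb⟩ • x b = 0
      rw [intervalModule_map_apply, dif_neg ha, zero_smul]
    · rw [dif_neg hb, LinearMap.zero_apply]

/-- Build a morphism from `V` to an interval module from a compatible family of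
functionals. -/
noncomputable def mkRet {I : Set P} (hI : IsConvex I) (V : PersMod k P)
    (lam : ∀ a, V.V a →ₗ[k] k)
    (h1 : ∀ a ∈ I, ∀ b ∈ I, ∀ h : a ≤ b, (lam b).comp (V.map h) = lam a)
    (h2 : ∀ a, a ∉ I → ∀ b ∈ I, ∀ h : a ≤ b, (lam b).comp (V.map h) = 0) :
    PersHom V (intervalModule k I hI) := by
  refine ⟨fun a => if ha : a ∈ I then retComp hI V lam a ha else 0, ?_⟩
  intro a b h
  by_cases hb : b ∈ I
  · apply LinearMap.ext; intro v
    simp only [LinearMap.coe_comp, Function.comp_apply]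
    rw [dif_pos hb]
    funext p
    show lam b (V.map h v) =
      (intervalModule k I hI).map h ((if ha : a ∈ I then retComp hI V lam a ha else 0) v) p
    rw [intervalModule_map_apply]
    by_cases ha : a ∈ I
    · rw [dif_pos ha, dif_pos ha]
      show lam b (V.map h v) = retComp hI V lam a ha v ⟨ha⟩
      show lam b (V.map h v) = lam a v
      rw [← LinearMap.comp_apply, h1 a ha b hb h]
    · rw [dif_neg ha]
      have := congrArg (fun f => f v) (h2 a ha b hb h)
      simpa using this
  · haveI := intervalModule_subsingleton (k := k) hI hb
    apply LinearMap.ext; intro v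
    exact Subsingleton.elim _ _

theorem mkSplit {I : Set P} (hI : IsConvex I) (V : PersMod k P)
    (x : ∀ a, V.V a) (lam : ∀ a, V.V a →ₗ[k] k)
    (h1 : ∀ a ∈ I, ∀ b ∈ I, ∀ h : a ≤ b, V.map h (x a) = x b)
    (h2 : ∀ a ∈ I, ∀ b, b ∉ I → ∀ h : a ≤ b, V.map h (x a) = 0)
    (h3 : ∀ a ∈ I, ∀ b ∈ I, ∀ h : a ≤ b, (lam b).comp (V.map h) = lam a)
    (h4 : ∀ a, a ∉ I → ∀ b ∈ I, ∀ h : a ≤ b, (lam b).comp (V.map h) = 0)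
    (hnorm : ∀ a ∈ I, lam a (x a) = 1) :
    persComp (mkEmb hI V x h1 h2) (mkRet hI V lam h3 h4) =
      persId (intervalModule k I hI) := by
  apply Subtype.ext
  funext a
  apply LinearMap.ext; intro g
  funext p
  have ha : a ∈ I := p.down
  show (mkRet hI V lam h3 h4).1 a ((mkEmb hI V x h1 h2).1 a g) p = g p
  show (if ha' : a ∈ I then retComp hI V lam a ha' else 0)
      ((if ha' : a ∈ I then embComp hI V x a ha' else 0) g) p = g p
  rw [dif_pos ha, dif_pos ha]
  show lam a (g ⟨ha⟩ • x a) = g p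
  rw [map_smul, hnorm a ha]
  have hpp : (⟨ha⟩ : PLift (a ∈ I)) = p := Subsingleton.elim _ _
  rw [hpp]
  show g p * 1 = g p
  rw [mul_one]

end Infra
section Split

variable {k : Type} [Field k] {P : Type} [PartialOrder P]

/-- The kernel sub-persistence-module of a morphism. -/
noncomputable def persKer {M N : PersMod k P} (r : PersHom M N) : PersMod k P :=
  M.sub (fun a => LinearMap.ker (r.1 a)) (by
    intro a b h x hx
    have h2 := congrArg (fun (f : M.V a →ₗ[k] N.V b) => f x) (r.2 a b h)
    simp only [LinearMap.coe_comp, Function.comp_apply] at h2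
    rw [LinearMap.mem_ker] at hx ⊢
    rw [h2, hx, map_zero])

theorem hir_pointwise {M N : PersMod k P} {i : PersHom N M} {r : PersHom M N}
    (hir : persComp i r = persId N) (a : P) : (r.1 a).comp (i.1 a) = LinearMap.id := by
  have h := congrArg Subtype.val hir
  exact congrFun h a

theorem iso_prod_of_split {M N : PersMod k P} (i : PersHom N M) (r : PersHom M N)
    (hir : persComp i r = persId N) : PersMod.Iso M (N.prod (persKer r)) := by
  have hri : ∀ a (y : N.V a), r.1 a (i.1 a y) = y := by
    intro a y
    have h := congrArg (fun (f : N.V a →ₗ[k] N.V a) => f y) (hir_pointwise hir a)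
    simpa using h
  have hp : ∀ a (x : M.V a), r.1 a (x - i.1 a (r.1 a x)) = 0 := by
    intro a x
    rw [map_sub, hri, sub_self]
  refine ⟨⟨fun a => LinearMap.prod (r.1 a)
      (LinearMap.codRestrict _ (LinearMap.id - (i.1 a).comp (r.1 a)) (fun x => by
        rw [LinearMap.mem_ker]
        simpa using hp a x)), ?_⟩, ?_⟩
  · intro a b h
    apply LinearMap.ext; intro x
    have hr := congrArg (fun (f : M.V a →ₗ[k] N.V b) => f x) (r.2 a b h)
    simp only [LinearMap.coe_comp, Function.comp_apply] at hr
    apply Prod.ext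
    · exact hr
    · apply Subtype.ext
      show M.map h x - i.1 b (r.1 b (M.map h x)) = M.map h (x - i.1 a (r.1 a x))
      have hi := congrArg (fun (f : N.V a →ₗ[k] M.V b) => f (r.1 a x)) (i.2 a b h)
      simp only [LinearMap.coe_comp, Function.comp_apply] at hi
      rw [map_sub, hr, ← hi]
  · intro a
    rw [Function.bijective_iff_has_inverse]
    refine ⟨fun p => i.1 a p.1 + p.2.1, fun x => ?_, fun p => ?_⟩
    · show i.1 a (r.1 a x) + (x - i.1 a (r.1 a x)) = x
      abel
    · have hk : r.1 a (p.2.1) = 0 := p.2.2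
      have h1 : r.1 a (i.1 a p.1 + p.2.1) = p.1 := by
        rw [map_add, hri, hk, add_zero]
      apply Prod.ext
      · exact h1
      · apply Subtype.ext
        show (i.1 a p.1 + p.2.1) - i.1 a (r.1 a (i.1 a p.1 + p.2.1)) = p.2.1
        rw [h1]; abel

noncomputable def totalDim [Fintype P] (M : PersMod k P) : ℕ :=
  ∑ a, Module.finrank k (M.V a)

theorem totalDim_ker_lt [Fintype P] {M N : PersMod k P} (r : PersHom M N)
    (a₀ : P) (h : LinearMap.ker (r.1 a₀) ≠ ⊤) : totalDim (persKer r) < totalDim M := by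
  apply Finset.sum_lt_sum
  · intro a _
    exact Submodule.finrank_le _
  · exact ⟨a₀, Finset.mem_univ _, Submodule.finrank_lt h⟩

theorem ker_ne_top_of_split {M : PersMod k P} {I : Set P} {hI : IsConvex I}
    {i : PersHom (intervalModule k I hI) M} {r : PersHom M (intervalModule k I hI)}
    (hir : persComp i r = persId _) {a₀ : P} (ha₀ : a₀ ∈ I) :
    LinearMap.ker (r.1 a₀) ≠ ⊤ := by
  intro htop
  have hg := congrArg (fun (f : (intervalModule k I hI).V a₀ →ₗ[k]
      (intervalModule k I hI).V a₀) => f (fun _ => (1:k))) (hir_pointwise hir a₀)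
  simp only [LinearMap.coe_comp, Function.comp_apply, LinearMap.id_apply] at hg
  have hz : r.1 a₀ (i.1 a₀ fun _ => (1:k)) = 0 := by
    have hm : i.1 a₀ (fun _ => (1:k)) ∈ LinearMap.ker (r.1 a₀) := htop ▸ Submodule.mem_top
    rwa [LinearMap.mem_ker] at hm
  replace hg : r.1 a₀ (i.1 a₀ fun _ => (1:k)) = (fun _ => (1:k)) := hg
  rw [hz] at hg
  exact zero_ne_one (congrFun hg ⟨ha₀⟩)

theorem persIso_refl (M : PersMod k P) : PersMod.Iso M M :=
  ⟨persId M, fun _ => Function.bijective_id⟩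

theorem persIso_trans {M N O : PersMod k P} (h1 : PersMod.Iso M N) (h2 : PersMod.Iso N O) :
    PersMod.Iso M O := by
  obtain ⟨f, hf⟩ := h1
  obtain ⟨g, hg⟩ := h2
  exact ⟨persComp f g, fun a => (hg a).comp (hf a)⟩

theorem persIso_symm {M N : PersMod k P} (h : PersMod.Iso M N) : PersMod.Iso N M := by
  obtain ⟨f, hf⟩ := h
  refine ⟨⟨fun a => ((LinearEquiv.ofBijective (f.1 a) (hf a)).symm : N.V a →ₗ[k] M.V a), ?_⟩, ?_⟩
  · intro a b h
    apply LinearMap.ext; intro y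
    apply (hf b).1
    show f.1 b ((LinearEquiv.ofBijective (f.1 b) (hf b)).symm (N.map h y)) =
      f.1 b (M.map h ((LinearEquiv.ofBijective (f.1 a) (hf a)).symm y))
    have h2 : ∀ z, f.1 b ((LinearEquiv.ofBijective (f.1 b) (hf b)).symm z) = z := fun z =>
      (LinearEquiv.ofBijective (f.1 b) (hf b)).apply_symm_apply z
    rw [h2]
    have hnat := congrArg (fun (q : M.V a →ₗ[k] N.V b) =>
      q ((LinearEquiv.ofBijective (f.1 a) (hf a)).symm y)) (f.2 a b h)
    simp only [LinearMap.coe_comp, Function.comp_apply] at hnat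
    rw [hnat]
    congr 1
    exact ((LinearEquiv.ofBijective (f.1 a) (hf a)).apply_symm_apply y).symm
  · intro a
    exact (LinearEquiv.ofBijective (f.1 a) (hf a)).symm.bijective

theorem persIso_of_eq {M N : PersMod k P} (h : M = N) : PersMod.Iso M N := by
  subst h; exact persIso_refl M

theorem persIso_prod_right {M W W' : PersMod k P} (h : PersMod.Iso W W') :
    PersMod.Iso (M.prod W) (M.prod W') := by
  obtain ⟨f, hf⟩ := h
  refine ⟨⟨fun a => (LinearMap.id : M.V a →ₗ[k] M.V a).prodMap (f.1 a), ?_⟩, ?_⟩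
  · intro a b h
    apply LinearMap.ext; intro p
    have hnat := congrArg (fun (q : W.V a →ₗ[k] W'.V b) => q p.2) (f.2 a b h)
    simp only [LinearMap.coe_comp, Function.comp_apply] at hnat
    apply Prod.ext
    · rfl
    · exact hnat
  · intro a
    exact Function.Bijective.prodMap Function.bijective_id (hf a)

theorem persIso_dsum {ι : Type} [Finite ι] {F G : ι → PersMod k P}
    (h : ∀ i, PersMod.Iso (F i) (G i)) : PersMod.Iso (PersMod.dsum F) (PersMod.dsum G) := by
  choose f hf using h
  refine ⟨⟨fun a => LinearMap.pi (fun i => ((f i).1 a).comp (LinearMap.proj i)), ?_⟩, ?_⟩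
  · intro a b h
    apply LinearMap.ext; intro g
    funext i
    show (f i).1 b ((F i).map h (g i)) = (G i).map h ((f i).1 a (g i))
    have hnat := congrArg (fun (q : (F i).V a →ₗ[k] (G i).V b) => q (g i)) ((f i).2 a b h)
    simpa using hnat
  · intro a
    rw [Function.bijective_iff_has_inverse]
    refine ⟨fun g i => (LinearEquiv.ofBijective ((f i).1 a) (hf i a)).symm (g i),
      fun g => ?_, fun g => ?_⟩
    · funext i
      show (LinearEquiv.ofBijective ((f i).1 a) (hf i a)).symm ((f i).1 a (g i)) = g i
      exact (LinearEquiv.ofBijective ((f i).1 a) (hf i a)).symm_apply_apply (g i)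
    · funext i
      show (f i).1 a ((LinearEquiv.ofBijective ((f i).1 a) (hf i a)).symm (g i)) = g i
      exact (LinearEquiv.ofBijective ((f i).1 a) (hf i a)).apply_symm_apply (g i)

/-- Reindexing a direct sum along an equivalence. -/
theorem persIso_dsum_reindex {ι ι' : Type} [Finite ι] [Finite ι'] (e : ι ≃ ι')
    (G : ι' → PersMod k P) :
    PersMod.Iso (PersMod.dsum (fun i => G (e i))) (PersMod.dsum G) := by
  apply persIso_symm
  refine ⟨⟨fun a =>
    { toFun := fun g i => g (e i)
      map_add' := fun g g' => rfl
      map_smul' := fun c g => rfl }, ?_⟩, ?_⟩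
  · intro a b h
    apply LinearMap.ext; intro g
    rfl
  · intro a
    have heq : (fun (g : ∀ i', (G i').V a) (i : ι) => g (e i)) =
        ⇑(Equiv.piCongrLeft (fun i' => (G i').V a) e).symm := by
      funext g i
      rw [Equiv.piCongrLeft_symm_apply]
    show Function.Bijective (fun (g : ∀ i', (G i').V a) (i : ι) => g (e i))
    rw [heq]
    exact (Equiv.piCongrLeft (fun i' => (G i').V a) e).symm.bijective

instance optionFinite {α : Type} [Finite α] : Finite (Option α) :=
  Finite.of_equiv _ (Equiv.optionEquivSumPUnit.{0,0} α).symm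

/-- A binary product with a direct sum is a direct sum over `Option`. -/
theorem persIso_prod_dsum_option {ι : Type} [Finite ι] (M : PersMod k P)
    (F : ι → PersMod k P) :
    PersMod.Iso (M.prod (PersMod.dsum F))
      (PersMod.dsum (fun o : Option ι => Option.elim o M F)) := by
  refine ⟨⟨fun a =>
    { toFun := fun p o =>
        Option.rec (motive := fun o => (Option.elim o M F).V a) p.1 (fun i => p.2 i) o
      map_add' := fun p q => by funext o; cases o <;> rfl
      map_smul' := fun c p => by funext o; cases o <;> rfl }, ?_⟩, ?_⟩
  · intro a b h
    apply LinearMap.ext; intro p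
    funext o
    cases o <;> rfl
  · intro a
    rw [Function.bijective_iff_has_inverse]
    refine ⟨fun g => (g none, fun i => g (some i)), fun p => ?_, fun g => ?_⟩
    · rfl
    · funext o; cases o <;> rfl

end Split
section LinAlg

variable {k : Type} [Field k]

theorem exists_functional {E : Type} [AddCommGroup E] [Module k E]
    (S : Submodule k E) (w : E) (hw : w ∉ S) :
    ∃ lam : E →ₗ[k] k, lam w = 1 ∧ ∀ y ∈ S, lam y = 0 := by
  have hwq0 : S.mkQ w ≠ 0 := by
    rw [Submodule.mkQ_apply]
    intro h0
    exact hw ((Submodule.Quotient.mk_eq_zero S).mp h0)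
  obtain ⟨C, hC⟩ := Submodule.exists_isCompl (Submodule.span k {S.mkQ w})
  set pr := Submodule.linearProjOfIsCompl _ _ hC with hpr
  set ev := (LinearEquiv.toSpanNonzeroSingleton k _ (S.mkQ w) hwq0).symm with hev
  refine ⟨(ev.toLinearMap.comp pr).comp S.mkQ, ?_, ?_⟩
  · show ev (pr (S.mkQ w)) = 1
    have h1 : pr (S.mkQ w) = ⟨S.mkQ w, Submodule.mem_span_singleton_self _⟩ :=
      Submodule.linearProjOfIsCompl_apply_left hC ⟨S.mkQ w, Submodule.mem_span_singleton_self _⟩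
    rw [h1, hev, LinearEquiv.symm_apply_eq, LinearEquiv.toSpanNonzeroSingleton_one]
  · intro y hy
    show ev (pr (S.mkQ y)) = 0
    have h0 : S.mkQ y = 0 := by
      rw [Submodule.mkQ_apply]
      exact (Submodule.Quotient.mk_eq_zero S).mpr hy
    rw [h0, map_zero, map_zero]

theorem exists_coupled_functionals {A U D : Type} [AddCommGroup A] [Module k A]
    [AddCommGroup U] [Module k U] [AddCommGroup D] [Module k D]
    (φ : A →ₗ[k] U) (ψ : A →ₗ[k] D) (x : A)
    (hx : x ∉ LinearMap.ker φ ⊔ LinearMap.ker ψ) :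
    ∃ (μ : U →ₗ[k] k) (ν : D →ₗ[k] k), μ.comp φ = ν.comp ψ ∧ μ (φ x) = 1 := by
  have hnot : φ x ∉ Submodule.map φ (LinearMap.ker ψ) := by
    rintro ⟨l, hl, hlx⟩
    apply hx
    have hxl : x - l ∈ LinearMap.ker φ := by
      rw [LinearMap.mem_ker, map_sub, hlx, sub_self]
    have hdec : x = (x - l) + l := by abel
    rw [hdec]
    exact Submodule.add_mem_sup hxl hl
  obtain ⟨μ, hμ1, hμ0⟩ := exists_functional _ _ hnot
  have hker : LinearMap.ker ψ ≤ LinearMap.ker (μ.comp φ) := by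
    intro l hl
    rw [LinearMap.mem_ker, LinearMap.comp_apply]
    exact hμ0 _ ⟨l, hl, rfl⟩
  set g := Submodule.liftQ (LinearMap.ker ψ) (μ.comp φ) hker with hg
  set eψ := ψ.quotKerEquivRange with heψ
  obtain ⟨C, hC⟩ := Submodule.exists_isCompl (LinearMap.range ψ)
  set pr := Submodule.linearProjOfIsCompl _ _ hC with hpr
  refine ⟨μ, (g.comp eψ.symm.toLinearMap).comp pr, ?_, hμ1⟩
  apply LinearMap.ext; intro a
  show μ (φ a) = g (eψ.symm (pr (ψ a)))
  have h1 : pr (ψ a) = ⟨ψ a, LinearMap.mem_range_self ψ a⟩ :=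
    Submodule.linearProjOfIsCompl_apply_left hC ⟨ψ a, LinearMap.mem_range_self ψ a⟩
  rw [h1]
  have h2 : eψ.symm ⟨ψ a, LinearMap.mem_range_self ψ a⟩ = Submodule.Quotient.mk a := by
    rw [LinearEquiv.symm_apply_eq]
    apply Subtype.ext
    rw [heψ]
    exact LinearMap.quotKerEquivRange_apply_mk ψ a
  rw [h2, hg, Submodule.liftQ_apply]
  rfl

theorem descent {E : Type} [AddCommGroup E] [Module k E]
    (M N : ℕ → Submodule k E) (hM : Monotone M) (hN : Monotone N)
    (hM0 : M 0 = ⊥) (hN0 : N 0 = ⊥) (T S : ℕ) (hT : M T = ⊤) (hS : N S = ⊤)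
    (w₀ : E) (hw₀ : w₀ ≠ 0) :
    ∃ t s w, 1 ≤ t ∧ t ≤ T ∧ 1 ≤ s ∧ s ≤ S ∧ w ∈ M t ∧ w ∈ N s ∧
      w ∉ M (t-1) ⊔ N (s-1) := by
  suffices h : ∀ c (w : E), w ≠ 0 → ∀ t s, w ∈ M t → w ∈ N s → t + s ≤ c →
      ∃ t s w, 1 ≤ t ∧ t ≤ T ∧ 1 ≤ s ∧ s ≤ S ∧ w ∈ M t ∧ w ∈ N s ∧
        w ∉ M (t-1) ⊔ N (s-1) by
    exact h (T + S) w₀ hw₀ T S (hT ▸ Submodule.mem_top) (hS ▸ Submodule.mem_top) le_rfl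
  intro c
  induction c using Nat.strong_induction_on with
  | _ c ih =>
    intro w hw t s hwt hws hts
    have hMex : ∃ t', w ∈ M t' := ⟨t, hwt⟩
    have hNex : ∃ s', w ∈ N s' := ⟨s, hws⟩
    set t₀ := Nat.find hMex with ht₀def
    set s₀ := Nat.find hNex with hs₀def
    have ht₀pos : 1 ≤ t₀ := by
      by_contra hcon
      have ht0 : t₀ = 0 := by omega
      have := Nat.find_spec hMex
      rw [← ht₀def, ht0, hM0, Submodule.mem_bot] at this
      exact hw this
    have hs₀pos : 1 ≤ s₀ := by
      by_contra hcon
      have hs0 : s₀ = 0 := by omega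
      have := Nat.find_spec hNex
      rw [← hs₀def, hs0, hN0, Submodule.mem_bot] at this
      exact hw this
    have ht₀T : t₀ ≤ T := Nat.find_le (hT ▸ Submodule.mem_top)
    have hs₀S : s₀ ≤ S := Nat.find_le (hS ▸ Submodule.mem_top)
    have ht₀t : t₀ ≤ t := Nat.find_le hwt
    have hs₀s : s₀ ≤ s := Nat.find_le hws
    by_cases hc : w ∈ M (t₀-1) ⊔ N (s₀-1)
    · rcases Submodule.mem_sup.mp hc with ⟨p, hp, q, hq, hpq⟩
      have hp0 : p ≠ 0 := by
        intro h0
        rw [h0, zero_add] at hpq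
        apply Nat.find_min hNex (show s₀ - 1 < s₀ by omega)
        rw [hpq] at hq
        exact hq
      have hpN : p ∈ N s₀ := by
        have hpwq : p = w - q := by rw [← hpq]; abel
        rw [hpwq]
        exact Submodule.sub_mem _ (Nat.find_spec hNex) (hN (by omega) hq)
      exact ih (t₀ - 1 + s₀) (by omega) p hp0 (t₀-1) s₀ hp hpN le_rfl
    · exact ⟨t₀, s₀, w, ht₀pos, ht₀T, hs₀pos, hs₀S, Nat.find_spec hMex,
        Nat.find_spec hNex, hc⟩

end LinAlg
namespace Bipath

variable {n m : ℕ}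

theorem eq_bot_of_le_bot {v : Bipath n m} (h : v ≤ .bot) : v = .bot := by
  cases v with
  | bot => rfl
  | up i => exact absurd h not_up_le_bot
  | down j => exact absurd h not_down_le_bot
  | top => exact absurd h not_top_le_bot

theorem eq_top_of_top_le {v : Bipath n m} (h : (.top : Bipath n m) ≤ v) : v = .top := by
  cases v with
  | bot => exact absurd h not_top_le_bot
  | up i => exact absurd h not_top_le_up
  | down j => exact absurd h not_top_le_down
  | top => rfl

theorem up_le_cases {i : Fin n} {v : Bipath n m} (h : (.up i : Bipath n m) ≤ v) :
    v = .top ∨ ∃ j : Fin n, v = .up j ∧ i ≤ j := by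
  cases v with
  | bot => exact absurd h not_up_le_bot
  | up j => exact Or.inr ⟨j, rfl, up_le_up.mp h⟩
  | down j => exact absurd h not_up_le_down
  | top => exact Or.inl rfl

theorem le_up_cases {i : Fin n} {v : Bipath n m} (h : v ≤ (.up i : Bipath n m)) :
    v = .bot ∨ ∃ j : Fin n, v = .up j ∧ j ≤ i := by
  cases v with
  | bot => exact Or.inl rfl
  | up j => exact Or.inr ⟨j, rfl, up_le_up.mp h⟩
  | down j => exact absurd h not_down_le_up
  | top => exact absurd h not_top_le_up

theorem down_le_cases {i : Fin m} {v : Bipath n m} (h : (.down i : Bipath n m) ≤ v) :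
    v = .top ∨ ∃ j : Fin m, v = .down j ∧ i ≤ j := by
  cases v with
  | bot => exact absurd h not_down_le_bot
  | up j => exact absurd h not_down_le_up
  | down j => exact Or.inr ⟨j, rfl, down_le_down.mp h⟩
  | top => exact Or.inl rfl

theorem le_down_cases {i : Fin m} {v : Bipath n m} (h : v ≤ (.down i : Bipath n m)) :
    v = .bot ∨ ∃ j : Fin m, v = .down j ∧ j ≤ i := by
  cases v with
  | bot => exact Or.inl rfl
  | up j => exact absurd h not_up_le_down
  | down j => exact Or.inr ⟨j, rfl, down_le_down.mp h⟩
  | top => exact absurd h not_top_le_down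

theorem up_down_le_top {i : Fin n} {j : Fin m} {v : Bipath n m}
    (h1 : (.up i : Bipath n m) ≤ v) (h2 : (.down j : Bipath n m) ≤ v) : v = .top := by
  rcases up_le_cases h1 with h | ⟨j', rfl, _⟩
  · exact h
  · exact absurd h2 not_down_le_up

theorem le_up_down_bot {i : Fin n} {j : Fin m} {v : Bipath n m}
    (h1 : v ≤ (.up i : Bipath n m)) (h2 : v ≤ (.down j : Bipath n m)) : v = .bot := by
  rcases le_up_cases h1 with h | ⟨j', rfl, _⟩
  · exact h
  · exact absurd h2 not_up_le_down

/-- `t`-th vertex along the upper path, with `0 ↦ bot` and overflow to `top`. -/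
def uvtx (n m : ℕ) (t : ℕ) : Bipath n m :=
  if t = 0 then .bot else if h : t - 1 < n then .up ⟨t-1, h⟩ else .top

/-- `s`-th vertex along the lower path. -/
def dvtx (n m : ℕ) (s : ℕ) : Bipath n m :=
  if s = 0 then .bot else if h : s - 1 < m then .down ⟨s-1, h⟩ else .top

theorem uvtx_mono {t t' : ℕ} (h : t ≤ t') : (uvtx n m t : Bipath n m) ≤ uvtx n m t' := by
  unfold uvtx
  by_cases h1 : t = 0
  · rw [if_pos h1]; exact bot_le' _
  · rw [if_neg h1]
    have h2 : t' ≠ 0 := by omega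
    rw [if_neg h2]
    by_cases h3 : t - 1 < n
    · rw [dif_pos h3]
      by_cases h4 : t' - 1 < n
      · rw [dif_pos h4]
        exact up_le_up.mpr (by simp only [Fin.mk_le_mk]; omega)
      · rw [dif_neg h4]; exact le_top' _
    · rw [dif_neg h3]
      have h4 : ¬ (t' - 1 < n) := by omega
      rw [dif_neg h4]

theorem dvtx_mono {s s' : ℕ} (h : s ≤ s') : (dvtx n m s : Bipath n m) ≤ dvtx n m s' := by
  unfold dvtx
  by_cases h1 : s = 0
  · rw [if_pos h1]; exact bot_le' _
  · rw [if_neg h1]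
    have h2 : s' ≠ 0 := by omega
    rw [if_neg h2]
    by_cases h3 : s - 1 < m
    · rw [dif_pos h3]
      by_cases h4 : s' - 1 < m
      · rw [dif_pos h4]
        exact down_le_down.mpr (by simp only [Fin.mk_le_mk]; omega)
      · rw [dif_neg h4]; exact le_top' _
    · rw [dif_neg h3]
      have h4 : ¬ (s' - 1 < m) := by omega
      rw [dif_neg h4]

theorem uvtx_zero : (uvtx n m 0 : Bipath n m) = .bot := rfl
theorem dvtx_zero : (dvtx n m 0 : Bipath n m) = .bot := rfl

theorem uvtx_top {t : ℕ} (h : t ≥ n + 1) : (uvtx n m t : Bipath n m) = .top := by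
  unfold uvtx
  rw [if_neg (by omega : ¬ t = 0), dif_neg (by omega : ¬ t - 1 < n)]

theorem dvtx_top {s : ℕ} (h : s ≥ m + 1) : (dvtx n m s : Bipath n m) = .top := by
  unfold dvtx
  rw [if_neg (by omega : ¬ s = 0), dif_neg (by omega : ¬ s - 1 < m)]

end Bipath
section Cases

open Bipath

variable {k : Type} [Field k] {n m : ℕ}

/-- `V` has an interval-module direct summand. -/
def HasSummand (V : PersMod k (Bipath n m)) : Prop :=
  ∃ (J : Set (Bipath n m)) (hJ : IsInterval J)
    (i : PersHom (intervalModule k J hJ.2.1) V)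
    (r : PersHom V (intervalModule k J hJ.2.1)),
    persComp i r = persId (intervalModule k J hJ.2.1)

theorem summand_of_family (V : PersMod k (Bipath n m)) (J : Set (Bipath n m))
    (hJ : IsInterval J) (x : ∀ a, V.V a) (lam : ∀ a, V.V a →ₗ[k] k)
    (h1 : ∀ a ∈ J, ∀ b ∈ J, ∀ h : a ≤ b, V.map h (x a) = x b)
    (h2 : ∀ a ∈ J, ∀ b, b ∉ J → ∀ h : a ≤ b, V.map h (x a) = 0)
    (h3 : ∀ a ∈ J, ∀ b ∈ J, ∀ h : a ≤ b, (lam b).comp (V.map h) = lam a)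
    (h4 : ∀ a, a ∉ J → ∀ b ∈ J, ∀ h : a ≤ b, (lam b).comp (V.map h) = 0)
    (hnorm : ∀ a ∈ J, lam a (x a) = 1) : HasSummand V :=
  ⟨J, hJ, mkEmb hJ.2.1 V x h1 h2, mkRet hJ.2.1 V lam h3 h4,
    mkSplit hJ.2.1 V x lam h1 h2 h3 h4 hnorm⟩

theorem top_case (hn : 0 < n) (hm : 0 < m) (V : PersMod k (Bipath n m))
    (hB : ∃ w : V.V .top, w ≠ 0) : HasSummand V := by
  classical
  obtain ⟨w₀, hw₀⟩ := hB
  set rngv : Bipath n m → Submodule k (V.V .top) :=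
    fun v => LinearMap.range (V.map (le_top' v)) with hrngv
  have hrng_mono : ∀ {a b : Bipath n m}, a ≤ b → rngv a ≤ rngv b := by
    intro a b h
    rintro z ⟨x, rfl⟩
    exact ⟨V.map h x, by rw [← LinearMap.comp_apply, ← V.map_comp]⟩
  have hrng_top : rngv .top = ⊤ := by
    rw [hrngv]
    show LinearMap.range (V.map (le_top' (.top : Bipath n m))) = ⊤
    have he : V.map (le_top' (.top : Bipath n m)) = LinearMap.id := V.map_id _
    rw [he]
    exact LinearMap.range_id
  set Mc : ℕ → Submodule k (V.V .top) :=
    fun t => if t = 0 then ⊥ else rngv (uvtx n m (t-1)) with hMc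
  set Nc : ℕ → Submodule k (V.V .top) :=
    fun s => if s = 0 then ⊥ else rngv (dvtx n m (s-1)) with hNc
  have hMmono : Monotone Mc := by
    intro t t' h
    by_cases h0 : t = 0
    · simp [hMc, h0]
    · have h0' : t' ≠ 0 := by omega
      simp only [hMc, if_neg h0, if_neg h0']
      exact hrng_mono (uvtx_mono (by omega))
  have hNmono : Monotone Nc := by
    intro s s' h
    by_cases h0 : s = 0
    · simp [hNc, h0]
    · have h0' : s' ≠ 0 := by omega
      simp only [hNc, if_neg h0, if_neg h0']
      exact hrng_mono (dvtx_mono (by omega))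
  have hMT : Mc (n+2) = ⊤ := by
    simp only [hMc, if_neg (by omega : ¬ n+2 = 0)]
    rw [uvtx_top (by omega)]
    exact hrng_top
  have hNS : Nc (m+2) = ⊤ := by
    simp only [hNc, if_neg (by omega : ¬ m+2 = 0)]
    rw [dvtx_top (by omega)]
    exact hrng_top
  obtain ⟨t, s, w, ht1, htT, hs1, hsS, hwM, hwN, hwnot⟩ :=
    descent Mc Nc hMmono hNmono (by simp [hMc]) (by simp [hNc]) (n+2) (m+2) hMT hNS w₀ hw₀
  have hw0 : w ≠ 0 := by
    intro h0; apply hwnot; rw [h0]; exact Submodule.zero_mem _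
  have hMc1 : Mc 1 = rngv .bot := by simp [hMc, uvtx_zero]
  have hNc1 : Nc 1 = rngv .bot := by simp [hNc, dvtx_zero]
  by_cases htcase : t = 1
  · -- full interval
    have hscase : s = 1 := by
      by_contra hs
      apply hwnot
      apply Submodule.mem_sup_right
      have hw1 : w ∈ Nc 1 := by
        rw [hNc1, ← hMc1, ← htcase]; exact hwM
      exact hNmono (by omega) hw1
    rw [htcase, hMc1] at hwM
    obtain ⟨v, hv⟩ := hwM
    obtain ⟨lam0, hlam1, hlam0⟩ := exists_functional (⊥ : Submodule k (V.V .top)) w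
      (by rw [Submodule.mem_bot]; exact hw0)
    have hJ : IsInterval (Set.univ : Set (Bipath n m)) := by
      refine ⟨⟨.top, trivial⟩, fun a b z _ _ _ _ => trivial, ?_⟩
      intro a _ b _
      exact Relation.ReflTransGen.head ⟨trivial, trivial, Or.inl (le_top' a)⟩
        (Relation.ReflTransGen.single ⟨trivial, trivial, Or.inr (le_top' b)⟩)
    apply summand_of_family V Set.univ hJ
      (fun a => V.map (bot_le' a) v)
      (fun a => lam0.comp (V.map (le_top' a)))
    · intro a _ b _ h
      rw [← LinearMap.comp_apply, ← V.map_comp]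
    · exact fun a _ b hb h => absurd trivial hb
    · intro a _ b _ h
      apply LinearMap.ext; intro z
      show lam0 (V.map (le_top' b) (V.map h z)) = lam0 (V.map (le_top' a) z)
      rw [← LinearMap.comp_apply (V.map (le_top' b)), ← V.map_comp]
    · exact fun a ha _ _ _ => absurd trivial ha
    · intro a _
      show lam0 (V.map (le_top' a) (V.map (bot_le' a) v)) = 1
      rw [← LinearMap.comp_apply (V.map (le_top' a)), ← V.map_comp]
      show lam0 (V.map (le_top' (.bot : Bipath n m)) v) = 1
      rw [hv]
      exact hlam1
  · -- shape (d): up-set generated by uvtx (t-1) and dvtx (s-1)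
    have ht2 : 2 ≤ t := by omega
    have hs2 : 2 ≤ s := by
      by_contra hs
      have hs1' : s = 1 := by omega
      apply hwnot
      apply Submodule.mem_sup_left
      have hw1 : w ∈ Mc 1 := by
        rw [hMc1, ← hNc1, ← hs1']; exact hwN
      exact hMmono (by omega) hw1
    set ustar := uvtx n m (t-1) with hustar
    set dstar := dvtx n m (s-1) with hdstar
    have hu_detail : (∃ hlt : t-2 < n, ustar = .up ⟨t-2, hlt⟩) ∨ (n ≤ t-2 ∧ ustar = .top) := by
      rw [hustar]
      unfold uvtx
      rw [if_neg (by omega : ¬ t-1 = 0)]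
      by_cases hc : t-1-1 < n
      · left
        refine ⟨by omega, ?_⟩
        rw [dif_pos hc]
        exact congrArg Bipath.up (Fin.ext (by show t-1-1 = t-2; omega))
      · right
        exact ⟨by omega, by rw [dif_neg hc]⟩
    have hd_detail : (∃ hlt : s-2 < m, dstar = .down ⟨s-2, hlt⟩) ∨ (m ≤ s-2 ∧ dstar = .top) := by
      rw [hdstar]
      unfold dvtx
      rw [if_neg (by omega : ¬ s-1 = 0)]
      by_cases hc : s-1-1 < m
      · left
        refine ⟨by omega, ?_⟩
        rw [dif_pos hc]
        exact congrArg Bipath.down (Fin.ext (by show s-1-1 = s-2; omega))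
      · right
        exact ⟨by omega, by rw [dif_neg hc]⟩
    have htoponly : ∀ v : Bipath n m, ustar ≤ v → dstar ≤ v → v = .top := by
      intro v h1 h2
      rcases hu_detail with ⟨_, hui⟩ | ⟨_, hut⟩
      · rcases hd_detail with ⟨_, hdj⟩ | ⟨_, hdt⟩
        · rw [hui] at h1; rw [hdj] at h2
          exact up_down_le_top h1 h2
        · rw [hdt] at h2; exact eq_top_of_top_le h2
      · rw [hut] at h1; exact eq_top_of_top_le h1
    set J : Set (Bipath n m) := {v | ustar ≤ v ∨ dstar ≤ v} with hJdef
    have hJmem : ∀ v : Bipath n m, v ∈ J ↔ (ustar ≤ v ∨ dstar ≤ v) := fun v => Iff.rfl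
    have htopJ : (.top : Bipath n m) ∈ J := Or.inl (le_top' _)
    have hupJ : ∀ a ∈ J, ∀ b, a ≤ b → b ∈ J := by
      intro a ha b h
      exact ha.elim (fun h' => Or.inl (h'.trans h)) (fun h' => Or.inr (h'.trans h))
    have hJ : IsInterval J := by
      refine ⟨⟨.top, htopJ⟩, ?_, ?_⟩
      · intro a b z ha hb haz hzb
        exact hupJ a ha z haz
      · intro a ha b hb
        exact Relation.ReflTransGen.head ⟨ha, htopJ, Or.inl (le_top' a)⟩
          (Relation.ReflTransGen.single ⟨htopJ, hb, Or.inr (le_top' b)⟩)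
    -- preimages
    have hwMt : w ∈ rngv ustar := by
      have h := hwM
      simp only [hMc] at h
      rw [if_neg (by omega : ¬ t = 0)] at h
      exact h
    have hwNs : w ∈ rngv dstar := by
      have h := hwN
      simp only [hNc] at h
      rw [if_neg (by omega : ¬ s = 0)] at h
      exact h
    obtain ⟨x₀, hx₀⟩ := hwMt
    obtain ⟨y₀, hy₀⟩ := hwNs
    obtain ⟨lam0, hlam1, hlam0⟩ := exists_functional (Mc (t-1) ⊔ Nc (s-1)) w hwnot
    set xf : ∀ v : Bipath n m, V.V v := fun v =>
      if h : ustar ≤ v then V.map h x₀ else if h' : dstar ≤ v then V.map h' y₀ else 0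
      with hxf
    have hxw : ∀ v ∈ J, V.map (le_top' v) (xf v) = w := by
      intro v hv
      by_cases h : ustar ≤ v
      · rw [hxf]
        show V.map (le_top' v) (if h' : ustar ≤ v then V.map h' x₀ else
          if h'' : dstar ≤ v then V.map h'' y₀ else 0) = w
        rw [dif_pos h, ← LinearMap.comp_apply, ← V.map_comp]
        exact hx₀
      · have hd : dstar ≤ v := hv.resolve_left h
        rw [hxf]
        show V.map (le_top' v) (if h' : ustar ≤ v then V.map h' x₀ else
          if h'' : dstar ≤ v then V.map h'' y₀ else 0) = w
        rw [dif_neg h, dif_pos hd, ← LinearMap.comp_apply, ← V.map_comp]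
        exact hy₀
    apply summand_of_family V J hJ xf (fun v => lam0.comp (V.map (le_top' v)))
    · -- h1
      intro a ha b hb h
      by_cases hua : ustar ≤ a
      · rw [hxf]
        show V.map h (if h' : ustar ≤ a then V.map h' x₀ else
            if h'' : dstar ≤ a then V.map h'' y₀ else 0) =
          (if h' : ustar ≤ b then V.map h' x₀ else
            if h'' : dstar ≤ b then V.map h'' y₀ else 0)
        rw [dif_pos hua, dif_pos (hua.trans h), ← LinearMap.comp_apply, ← V.map_comp]
      · have hda : dstar ≤ a := ha.resolve_left hua
        rw [hxf]
        show V.map h (if h' : ustar ≤ a then V.map h' x₀ else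
            if h'' : dstar ≤ a then V.map h'' y₀ else 0) =
          (if h' : ustar ≤ b then V.map h' x₀ else
            if h'' : dstar ≤ b then V.map h'' y₀ else 0)
        rw [dif_neg hua, dif_pos hda]
        by_cases hub : ustar ≤ b
        · have hbtop : b = .top := htoponly b hub (hda.trans h)
          subst hbtop
          rw [dif_pos hub]
          have e1 : V.map h (V.map hda y₀) = w := by
            rw [← LinearMap.comp_apply, ← V.map_comp]
            exact hy₀
          have e2 : V.map hub x₀ = w := hx₀
          rw [e1, e2]
        · rw [dif_neg hub, dif_pos (hda.trans h), ← LinearMap.comp_apply, ← V.map_comp]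
    · -- h2 : vacuous, J is an up-set
      intro a ha b hb h
      exact absurd (hupJ a ha b h) hb
    · -- h3
      intro a _ b _ h
      apply LinearMap.ext; intro z
      show lam0 (V.map (le_top' b) (V.map h z)) = lam0 (V.map (le_top' a) z)
      rw [← LinearMap.comp_apply (V.map (le_top' b)), ← V.map_comp]
    · -- h4
      intro a ha b hb h
      apply LinearMap.ext; intro z
      show lam0 (V.map (le_top' b) (V.map h z)) = 0
      rw [← LinearMap.comp_apply (V.map (le_top' b)), ← V.map_comp]
      show lam0 (V.map (le_top' a) z) = 0
      apply hlam0
      have hua : ¬ ustar ≤ a := fun hc => ha (Or.inl hc)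
      have hda : ¬ dstar ≤ a := fun hc => ha (Or.inr hc)
      cases a with
      | top => exact absurd (le_top' _) hua
      | bot =>
        apply Submodule.mem_sup_left
        simp only [hMc]
        rw [if_neg (by omega : ¬ t-1 = 0)]
        have hle : (Bipath.bot : Bipath n m) ≤ uvtx n m (t-2) := bot_le' _
        exact hrng_mono (show (Bipath.bot : Bipath n m) ≤ uvtx n m (t-1-1) from bot_le' _)
          ⟨z, rfl⟩
      | up i =>
        apply Submodule.mem_sup_left
        simp only [hMc]
        rw [if_neg (by omega : ¬ t-1 = 0)]
        have hle : (Bipath.up i : Bipath n m) ≤ uvtx n m (t-1-1) := by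
          rcases hu_detail with ⟨hlt, hui⟩ | ⟨hge, hut⟩
          · rw [hui] at hua
            have hilt : i.1 < t-2 := by
              by_contra hcon
              exact hua (up_le_up.mpr (by rw [Fin.le_def]; show t-2 ≤ i.1; omega))
            unfold uvtx
            rw [if_neg (by omega : ¬ t-1-1 = 0)]
            by_cases hc : t-1-1-1 < n
            · rw [dif_pos hc]
              exact up_le_up.mpr (by rw [Fin.le_def]; show i.1 ≤ t-1-1-1; omega)
            · rw [dif_neg hc]
              exact le_top' _
          · unfold uvtx
            rw [if_neg (by omega : ¬ t-1-1 = 0)]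
            by_cases hc : t-1-1-1 < n
            · rw [dif_pos hc]
              exact up_le_up.mpr (by
                rw [Fin.le_def]
                show i.1 ≤ t-1-1-1
                have := i.2
                omega)
            · rw [dif_neg hc]
              exact le_top' _
        exact hrng_mono hle ⟨z, rfl⟩
      | down j =>
        apply Submodule.mem_sup_right
        simp only [hNc]
        rw [if_neg (by omega : ¬ s-1 = 0)]
        have hle : (Bipath.down j : Bipath n m) ≤ dvtx n m (s-1-1) := by
          rcases hd_detail with ⟨hlt, hdj⟩ | ⟨hge, hdt⟩
          · rw [hdj] at hda
            have hjlt : j.1 < s-2 := by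
              by_contra hcon
              exact hda (down_le_down.mpr (by rw [Fin.le_def]; show s-2 ≤ j.1; omega))
            unfold dvtx
            rw [if_neg (by omega : ¬ s-1-1 = 0)]
            by_cases hc : s-1-1-1 < m
            · rw [dif_pos hc]
              exact down_le_down.mpr (by rw [Fin.le_def]; show j.1 ≤ s-1-1-1; omega)
            · rw [dif_neg hc]
              exact le_top' _
          · unfold dvtx
            rw [if_neg (by omega : ¬ s-1-1 = 0)]
            by_cases hc : s-1-1-1 < m
            · rw [dif_pos hc]
              exact down_le_down.mpr (by
                rw [Fin.le_def]
                show j.1 ≤ s-1-1-1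
                have := j.2
                omega)
            · rw [dif_neg hc]
              exact le_top' _
        exact hrng_mono hle ⟨z, rfl⟩
    · -- hnorm
      intro a ha
      show lam0 (V.map (le_top' a) (xf a)) = 1
      rw [hxw a ha]
      exact hlam1

end Cases
section BotCase

open Bipath

variable {k : Type} [Field k] {n m : ℕ}

theorem bot_case (hn : 0 < n) (hm : 0 < m) (V : PersMod k (Bipath n m))
    (hB : ∀ y : V.V .top, y = 0) (hA : ∃ x : V.V .bot, x ≠ 0) : HasSummand V := by
  classical
  obtain ⟨x₀', hx₀'⟩ := hA
  set kerv : Bipath n m → Submodule k (V.V .bot) :=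
    fun v => LinearMap.ker (V.map (bot_le' v)) with hkerv
  have hker_mono : ∀ {a b : Bipath n m}, a ≤ b → kerv a ≤ kerv b := by
    intro a b h z hz
    show V.map (bot_le' b) z = 0
    have hzz : V.map (bot_le' a) z = 0 := hz
    have hcol : V.map (bot_le' b) z = V.map h (V.map (bot_le' a) z) := by
      rw [← LinearMap.comp_apply, ← V.map_comp]
    rw [hcol, hzz, map_zero]
  have hker_topv : kerv .top = ⊤ := by
    rw [eq_top_iff]
    intro z _
    show V.map (bot_le' (.top : Bipath n m)) z = 0
    exact hB _
  set Kc : ℕ → Submodule k (V.V .bot) :=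
    fun t => if t = 0 then ⊥ else kerv (uvtx n m t) with hKc
  set Lc : ℕ → Submodule k (V.V .bot) :=
    fun s => if s = 0 then ⊥ else kerv (dvtx n m s) with hLc
  have hKmono : Monotone Kc := by
    intro t t' h
    by_cases h0 : t = 0
    · simp [hKc, h0]
    · have h0' : t' ≠ 0 := by omega
      simp only [hKc, if_neg h0, if_neg h0']
      exact hker_mono (uvtx_mono (by omega))
  have hLmono : Monotone Lc := by
    intro s s' h
    by_cases h0 : s = 0
    · simp [hLc, h0]
    · have h0' : s' ≠ 0 := by omega
      simp only [hLc, if_neg h0, if_neg h0']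
      exact hker_mono (dvtx_mono (by omega))
  have hKT : Kc (n+1) = ⊤ := by
    simp only [hKc, if_neg (by omega : ¬ n+1 = 0)]
    rw [uvtx_top (by omega)]
    exact hker_topv
  have hLS : Lc (m+1) = ⊤ := by
    simp only [hLc, if_neg (by omega : ¬ m+1 = 0)]
    rw [dvtx_top (by omega)]
    exact hker_topv
  obtain ⟨t, s, x, ht1, htT, hs1, hsS, hxK, hxL, hxnot⟩ :=
    descent Kc Lc hKmono hLmono (by simp [hKc]) (by simp [hLc]) (n+1) (m+1) hKT hLS x₀' hx₀'
  set ustar := uvtx n m (t-1) with hustar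
  set dstar := dvtx n m (s-1) with hdstar
  have hu_detail : (t = 1 ∧ ustar = .bot) ∨ (∃ hlt : t-2 < n, ustar = .up ⟨t-2, hlt⟩) := by
    rw [hustar]
    unfold uvtx
    by_cases h0 : t - 1 = 0
    · left
      exact ⟨by omega, by rw [if_pos h0]⟩
    · right
      refine ⟨by omega, ?_⟩
      rw [if_neg h0, dif_pos (by omega : t-1-1 < n)]
      exact congrArg Bipath.up (Fin.ext (by show t-1-1 = t-2; omega))
  have hd_detail : (s = 1 ∧ dstar = .bot) ∨ (∃ hlt : s-2 < m, dstar = .down ⟨s-2, hlt⟩) := by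
    rw [hdstar]
    unfold dvtx
    by_cases h0 : s - 1 = 0
    · left
      exact ⟨by omega, by rw [if_pos h0]⟩
    · right
      refine ⟨by omega, ?_⟩
      rw [if_neg h0, dif_pos (by omega : s-1-1 < m)]
      exact congrArg Bipath.down (Fin.ext (by show s-1-1 = s-2; omega))
  have hbotonly : ∀ v : Bipath n m, v ≤ ustar → v ≤ dstar → v = .bot := by
    intro v h1 h2
    rcases hu_detail with ⟨_, hub⟩ | ⟨hlt, hui⟩
    · rw [hub] at h1; exact eq_bot_of_le_bot h1
    · rcases hd_detail with ⟨_, hdb⟩ | ⟨hlt', hdj⟩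
      · rw [hdb] at h2; exact eq_bot_of_le_bot h2
      · rw [hui] at h1; rw [hdj] at h2
        exact le_up_down_bot h1 h2
  set J : Set (Bipath n m) := {v | v ≤ ustar ∨ v ≤ dstar} with hJdef
  have hbotJ : (.bot : Bipath n m) ∈ J := Or.inl (bot_le' _)
  have hdownJ : ∀ b ∈ J, ∀ a, a ≤ b → a ∈ J := by
    intro b hb a h
    exact hb.elim (fun h' => Or.inl (h.trans h')) (fun h' => Or.inr (h.trans h'))
  have hJ : IsInterval J := by
    refine ⟨⟨.bot, hbotJ⟩, ?_, ?_⟩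
    · intro a b z ha hb haz hzb
      exact hdownJ b hb z hzb
    · intro a ha b hb
      exact Relation.ReflTransGen.head ⟨ha, hbotJ, Or.inr (bot_le' a)⟩
        (Relation.ReflTransGen.single ⟨hbotJ, hb, Or.inl (bot_le' b)⟩)
  -- x dies outside J
  have hxdies : ∀ b : Bipath n m, b ∉ J → V.map (bot_le' b) x = 0 := by
    intro b hbJ
    have hub : ¬ b ≤ ustar := fun hc => hbJ (Or.inl hc)
    have hdb : ¬ b ≤ dstar := fun hc => hbJ (Or.inr hc)
    cases b with
    | bot => exact absurd (bot_le' _) hub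
    | top => exact hB _
    | up i =>
      have hxK' : x ∈ kerv (uvtx n m t) := by
        have h := hxK
        simp only [hKc] at h
        rw [if_neg (by omega : ¬ t = 0)] at h
        exact h
      have hle : uvtx n m t ≤ (Bipath.up i : Bipath n m) := by
        rcases hu_detail with ⟨ht1', hub'⟩ | ⟨hlt, hui⟩
        · -- t = 1 : uvtx 1 ≤ up i requires 0 ≤ i
          unfold uvtx
          rw [if_neg (by omega : ¬ t = 0), dif_pos (by omega : t - 1 < n)]
          exact up_le_up.mpr (by rw [Fin.le_def]; show t-1 ≤ i.1; omega)
        · -- ustar = up ⟨t-2⟩ and ¬ up i ≤ up ⟨t-2⟩ : i.1 ≥ t-1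
          rw [hui] at hub
          have hige : t-1 ≤ i.1 := by
            by_contra hcon
            exact hub (up_le_up.mpr (by rw [Fin.le_def]; show i.1 ≤ t-2; omega))
          unfold uvtx
          rw [if_neg (by omega : ¬ t = 0), dif_pos (by omega : t - 1 < n)]
          exact up_le_up.mpr (by rw [Fin.le_def]; show t-1 ≤ i.1; omega)
      exact hker_mono hle hxK'
    | down j =>
      have hxL' : x ∈ kerv (dvtx n m s) := by
        have h := hxL
        simp only [hLc] at h
        rw [if_neg (by omega : ¬ s = 0)] at h
        exact h
      have hle : dvtx n m s ≤ (Bipath.down j : Bipath n m) := by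
        rcases hd_detail with ⟨hs1', hdb'⟩ | ⟨hlt, hdj⟩
        · unfold dvtx
          rw [if_neg (by omega : ¬ s = 0), dif_pos (by omega : s - 1 < m)]
          exact down_le_down.mpr (by rw [Fin.le_def]; show s-1 ≤ j.1; omega)
        · rw [hdj] at hdb
          have hjge : s-1 ≤ j.1 := by
            by_contra hcon
            exact hdb (down_le_down.mpr (by rw [Fin.le_def]; show j.1 ≤ s-2; omega))
          unfold dvtx
          rw [if_neg (by omega : ¬ s = 0), dif_pos (by omega : s - 1 < m)]
          exact down_le_down.mpr (by rw [Fin.le_def]; show s-1 ≤ j.1; omega)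
      exact hker_mono hle hxL'
  -- the coupled functionals
  set phi : V.V .bot →ₗ[k] V.V ustar := V.map (bot_le' ustar) with hphi
  set psi : V.V .bot →ₗ[k] V.V dstar := V.map (bot_le' dstar) with hpsi
  have hkerphi : LinearMap.ker phi = Kc (t-1) := by
    by_cases h0 : t - 1 = 0
    · simp only [hKc, if_pos h0]
      have hb : ustar = (.bot : Bipath n m) := by
        rw [hustar, h0]; exact uvtx_zero
      rw [hphi, hb]
      have hid : V.map (bot_le' (.bot : Bipath n m)) = LinearMap.id := V.map_id _
      rw [hid]
      exact LinearMap.ker_id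
    · simp only [hKc, if_neg h0]
      rfl
  have hkerpsi : LinearMap.ker psi = Lc (s-1) := by
    by_cases h0 : s - 1 = 0
    · simp only [hLc, if_pos h0]
      have hb : dstar = (.bot : Bipath n m) := by
        rw [hdstar, h0]; exact dvtx_zero
      rw [hpsi, hb]
      have hid : V.map (bot_le' (.bot : Bipath n m)) = LinearMap.id := V.map_id _
      rw [hid]
      exact LinearMap.ker_id
    · simp only [hLc, if_neg h0]
      rfl
  have hxnot' : x ∉ LinearMap.ker phi ⊔ LinearMap.ker psi := by
    rw [hkerphi, hkerpsi]; exact hxnot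
  obtain ⟨mu, nu, hmunu, hmu1⟩ := exists_coupled_functionals phi psi x hxnot'
  set lamf : ∀ v : Bipath n m, V.V v →ₗ[k] k := fun v =>
    if h : v ≤ ustar then mu.comp (V.map h) else
      if h' : v ≤ dstar then nu.comp (V.map h') else 0 with hlamf
  have hlam_eval : ∀ v ∈ J, (lamf v) (V.map (bot_le' v) x) = 1 := by
    intro v hv
    by_cases hu : v ≤ ustar
    · rw [hlamf]
      show (if h : v ≤ ustar then mu.comp (V.map h) else
        if h' : v ≤ dstar then nu.comp (V.map h') else 0) (V.map (bot_le' v) x) = 1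
      rw [dif_pos hu]
      show mu (V.map hu (V.map (bot_le' v) x)) = 1
      rw [← LinearMap.comp_apply (V.map hu), ← V.map_comp]
      exact hmu1
    · have hd : v ≤ dstar := hv.resolve_left hu
      rw [hlamf]
      show (if h : v ≤ ustar then mu.comp (V.map h) else
        if h' : v ≤ dstar then nu.comp (V.map h') else 0) (V.map (bot_le' v) x) = 1
      rw [dif_neg hu, dif_pos hd]
      show nu (V.map hd (V.map (bot_le' v) x)) = 1
      rw [← LinearMap.comp_apply (V.map hd), ← V.map_comp]
      show nu (psi x) = 1
      have hc := congrArg (fun (f : V.V .bot →ₗ[k] k) => f x) hmunu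
      simp only [LinearMap.coe_comp, Function.comp_apply] at hc
      rw [← hc]
      exact hmu1
  apply summand_of_family V J hJ (fun v => V.map (bot_le' v) x) lamf
  · -- h1
    intro a _ b _ h
    rw [← LinearMap.comp_apply, ← V.map_comp]
  · -- h2
    intro a _ b hb h
    rw [← LinearMap.comp_apply, ← V.map_comp]
    exact hxdies b hb
  · -- h3
    intro a ha b hb h
    by_cases hub : b ≤ ustar
    · rw [hlamf]
      show (LinearMap.comp (if h' : b ≤ ustar then mu.comp (V.map h') else
          if h'' : b ≤ dstar then nu.comp (V.map h'') else 0) (V.map h)) =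
        (if h' : a ≤ ustar then mu.comp (V.map h') else
          if h'' : a ≤ dstar then nu.comp (V.map h'') else 0)
      rw [dif_pos hub, dif_pos (h.trans hub)]
      apply LinearMap.ext; intro z
      show mu (V.map hub (V.map h z)) = mu (V.map (h.trans hub) z)
      rw [← LinearMap.comp_apply (V.map hub), ← V.map_comp]
    · have hdb : b ≤ dstar := hb.resolve_left hub
      rw [hlamf]
      show (LinearMap.comp (if h' : b ≤ ustar then mu.comp (V.map h') else
          if h'' : b ≤ dstar then nu.comp (V.map h'') else 0) (V.map h)) =
        (if h' : a ≤ ustar then mu.comp (V.map h') else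
          if h'' : a ≤ dstar then nu.comp (V.map h'') else 0)
      rw [dif_neg hub]
      rw [dif_pos hdb]
      by_cases hua : a ≤ ustar
      · rw [dif_pos hua]
        have hab : a = .bot := hbotonly a hua (h.trans hdb)
        subst hab
        apply LinearMap.ext; intro z
        show nu (V.map hdb (V.map h z)) = mu (V.map hua z)
        rw [← LinearMap.comp_apply (V.map hdb), ← V.map_comp]
        show nu (psi z) = mu (phi z)
        have hc := congrArg (fun (f : V.V .bot →ₗ[k] k) => f z) hmunu
        simp only [LinearMap.coe_comp, Function.comp_apply] at hc
        rw [← hc]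
      · rw [dif_neg hua, dif_pos (h.trans hdb)]
        apply LinearMap.ext; intro z
        show nu (V.map hdb (V.map h z)) = nu (V.map (h.trans hdb) z)
        rw [← LinearMap.comp_apply (V.map hdb), ← V.map_comp]
  · -- h4 : vacuous, J is a down-set
    intro a ha b hb h
    exact absurd (hdownJ b hb a h) ha
  · -- hnorm
    intro a ha
    exact hlam_eval a ha

end BotCase
section MidCase

open Bipath

variable {k : Type} [Field k] {n m : ℕ}

theorem mid_up_case (hn : 0 < n) (hm : 0 < m) (V : PersMod k (Bipath n m))
    (hB : ∀ y : V.V .top, y = 0) (hA : ∀ y : V.V .bot, y = 0)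
    (hU : ∃ (i : Fin n) (x : V.V (.up i)), x ≠ 0) : HasSummand V := by
  classical
  obtain ⟨i₀, x', hx'⟩ := hU
  set Pq : ℕ → Prop := fun q => ∃ h : q < n, ∃ x : V.V (.up ⟨q, h⟩), x ≠ 0 with hPq
  have hPq0 : Pq i₀.1 := ⟨i₀.2, x', hx'⟩
  set q := Nat.findGreatest Pq n with hq
  have hPqq : Pq q := Nat.findGreatest_spec (le_of_lt i₀.2) hPq0
  obtain ⟨hqlt, hwex⟩ := hPqq
  have hmax : ∀ j : Fin n, q < j.1 → ∀ y : V.V (.up j), y = 0 := by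
    intro j hj y
    by_contra hy
    exact Nat.findGreatest_is_greatest hj (le_of_lt j.2) ⟨j.2, y, hy⟩
  set qv : Fin n := ⟨q, hqlt⟩ with hqv
  obtain ⟨w, hw⟩ : ∃ x : V.V (.up qv), x ≠ 0 := hwex
  set Pp : ℕ → Prop := fun p' => ∃ (h : p' < n)
    (hle : (Bipath.up ⟨p', h⟩ : Bipath n m) ≤ .up qv) (z : V.V (.up ⟨p', h⟩)),
    V.map hle z = w with hPp
  have hPpex : ∃ p', Pp p' := by
    refine ⟨q, hqlt, le_refl _, w, ?_⟩
    have hid : V.map (le_refl (.up qv : Bipath n m)) = LinearMap.id := V.map_id _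
    exact congrArg (fun (f : V.V (.up qv) →ₗ[k] V.V (.up qv)) => f w) hid
  set p := Nat.find hPpex with hp
  obtain ⟨hpn, hrest⟩ := Nat.find_spec hPpex
  have hpq : p ≤ q := Nat.find_le ⟨hqlt, le_refl _, w, by
    have hid : V.map (le_refl (.up qv : Bipath n m)) = LinearMap.id := V.map_id _
    exact congrArg (fun (f : V.V (.up qv) →ₗ[k] V.V (.up qv)) => f w) hid⟩
  set pv : Fin n := ⟨p, hpn⟩ with hpv
  obtain ⟨hple, x₀, hx₀⟩ : ∃ (hle : (.up pv : Bipath n m) ≤ .up qv)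
      (z : V.V (.up pv)), V.map hle z = w := hrest
  set J : Set (Bipath n m) := {v | (.up pv : Bipath n m) ≤ v ∧ v ≤ .up qv} with hJdef
  have hqvJ : (.up qv : Bipath n m) ∈ J := ⟨up_le_up.mpr (by rw [Fin.le_def]; show p ≤ q; exact hpq), le_refl _⟩
  have hJ : IsInterval J := by
    refine ⟨⟨.up qv, hqvJ⟩, ?_, ?_⟩
    · intro a b z ha hb haz hzb
      exact ⟨ha.1.trans haz, hzb.trans hb.2⟩
    · intro a ha b hb
      rcases up_le_cases ha.1 with hat | ⟨i, hai, hpi⟩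
      · rw [hat] at ha
        exact absurd ha.2 not_top_le_up
      · rcases up_le_cases hb.1 with hbt | ⟨j, hbj, hpj⟩
        · rw [hbt] at hb
          exact absurd hb.2 not_top_le_up
        · refine Relation.ReflTransGen.single ⟨ha, hb, ?_⟩
          rw [hai, hbj]
          rcases le_total i j with hij | hij
          · exact Or.inl (up_le_up.mpr hij)
          · exact Or.inr (up_le_up.mpr hij)
  have hdies : ∀ b : Bipath n m, b ∉ J → ∀ hle : (.up pv : Bipath n m) ≤ b,
      V.map hle x₀ = 0 := by
    intro b hbJ hle
    cases b with
    | bot => exact absurd hle not_up_le_bot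
    | down j => exact absurd hle not_up_le_down
    | top => exact hB _
    | up j =>
      have hqj : ¬ (Bipath.up j : Bipath n m) ≤ .up qv := fun hc => hbJ ⟨hle, hc⟩
      have hjq : q < j.1 := by
        by_contra hcon
        exact hqj (up_le_up.mpr (by rw [Fin.le_def]; show j.1 ≤ q; omega))
      exact hmax j hjq _
  -- the functional
  have hSex : ∃ lam0 : V.V (.up qv) →ₗ[k] k, lam0 w = 1 ∧
      ∀ (i : Fin n) (hip : i.1 < p) (z : V.V (.up i)),
        lam0 (V.map (up_le_up.mpr (by rw [Fin.le_def]; show i.1 ≤ q; omega) :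
          (Bipath.up i : Bipath n m) ≤ .up qv) z) = 0 := by
    by_cases hp0 : p = 0
    · obtain ⟨lam0, h1, _⟩ := exists_functional (⊥ : Submodule k (V.V (.up qv))) w
        (by rw [Submodule.mem_bot]; exact hw)
      exact ⟨lam0, h1, fun i hip z => absurd hip (by omega)⟩
    · have hppn : p - 1 < n := by omega
      set predv : Bipath n m := .up ⟨p-1, hppn⟩ with hpredv
      have hprle : predv ≤ (.up qv : Bipath n m) :=
        up_le_up.mpr (by rw [Fin.le_def]; show p-1 ≤ q; omega)
      have hwnot : w ∉ LinearMap.range (V.map hprle) := by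
        rintro ⟨z, hz⟩
        exact Nat.find_min hPpex (show p - 1 < p by omega) ⟨hppn, hprle, z, hz⟩
      obtain ⟨lam0, h1, h0⟩ := exists_functional _ w hwnot
      refine ⟨lam0, h1, ?_⟩
      intro i hip z
      apply h0
      have hipred : (Bipath.up i : Bipath n m) ≤ predv :=
        up_le_up.mpr (by rw [Fin.le_def]; show i.1 ≤ p-1; omega)
      refine ⟨V.map hipred z, ?_⟩
      rw [← LinearMap.comp_apply, ← V.map_comp]
  obtain ⟨lam0, hlam1, hlam0⟩ := hSex
  apply summand_of_family V J hJ
    (fun v => if h : v ∈ J then V.map h.1 x₀ else 0)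
    (fun v => if h : v ≤ (.up qv : Bipath n m) then lam0.comp (V.map h) else 0)
  · -- h1
    intro a ha b hb h
    rw [dif_pos ha, dif_pos hb, ← LinearMap.comp_apply, ← V.map_comp]
  · -- h2
    intro a ha b hb h
    rw [dif_pos ha, ← LinearMap.comp_apply, ← V.map_comp]
    exact hdies b hb _
  · -- h3
    intro a ha b hb h
    rw [dif_pos ha.2, dif_pos hb.2]
    apply LinearMap.ext; intro z
    show lam0 (V.map hb.2 (V.map h z)) = lam0 (V.map ha.2 z)
    rw [← LinearMap.comp_apply (V.map hb.2), ← V.map_comp]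
  · -- h4
    intro a ha b hb h
    rw [dif_pos hb.2]
    apply LinearMap.ext; intro z
    show lam0 (V.map hb.2 (V.map h z)) = 0
    rw [← LinearMap.comp_apply (V.map hb.2), ← V.map_comp]
    have hab : a ≤ (.up qv : Bipath n m) := h.trans hb.2
    cases a with
    | top => exact absurd hab not_top_le_up
    | down j => exact absurd hab not_down_le_up
    | bot =>
      rw [hA z, map_zero, map_zero]
    | up i =>
      have hip : i.1 < p := by
        by_contra hcon
        exact ha ⟨up_le_up.mpr (by rw [Fin.le_def]; show p ≤ i.1; omega), hab⟩
      have := hlam0 i hip z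
      convert this using 2
  · -- hnorm
    intro a ha
    rw [dif_pos ha.2, dif_pos ha]
    show lam0 (V.map ha.2 (V.map ha.1 x₀)) = 1
    rw [← LinearMap.comp_apply (V.map ha.2), ← V.map_comp]
    show lam0 (V.map hple x₀) = 1
    rw [hx₀]
    exact hlam1

end MidCase
section MidCase2

open Bipath

variable {k : Type} [Field k] {n m : ℕ}

theorem mid_down_case (hn : 0 < n) (hm : 0 < m) (V : PersMod k (Bipath n m))
    (hB : ∀ y : V.V .top, y = 0) (hA : ∀ y : V.V .bot, y = 0)
    (hU : ∃ (i : Fin m) (x : V.V (.down i)), x ≠ 0) : HasSummand V := by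
  classical
  obtain ⟨i₀, x', hx'⟩ := hU
  set Pq : ℕ → Prop := fun q => ∃ h : q < m, ∃ x : V.V (.down ⟨q, h⟩), x ≠ 0 with hPq
  have hPq0 : Pq i₀.1 := ⟨i₀.2, x', hx'⟩
  set q := Nat.findGreatest Pq m with hq
  have hPqq : Pq q := Nat.findGreatest_spec (le_of_lt i₀.2) hPq0
  obtain ⟨hqlt, hwex⟩ := hPqq
  have hmax : ∀ j : Fin m, q < j.1 → ∀ y : V.V (.down j), y = 0 := by
    intro j hj y
    by_contra hy
    exact Nat.findGreatest_is_greatest hj (le_of_lt j.2) ⟨j.2, y, hy⟩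
  set qv : Fin m := ⟨q, hqlt⟩ with hqv
  obtain ⟨w, hw⟩ : ∃ x : V.V (.down qv), x ≠ 0 := hwex
  set Pp : ℕ → Prop := fun p' => ∃ (h : p' < m)
    (hle : (Bipath.down ⟨p', h⟩ : Bipath n m) ≤ .down qv) (z : V.V (.down ⟨p', h⟩)),
    V.map hle z = w with hPp
  have hPpex : ∃ p', Pp p' := by
    refine ⟨q, hqlt, le_refl _, w, ?_⟩
    have hid : V.map (le_refl (.down qv : Bipath n m)) = LinearMap.id := V.map_id _
    exact congrArg (fun (f : V.V (.down qv) →ₗ[k] V.V (.down qv)) => f w) hid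
  set p := Nat.find hPpex with hp
  obtain ⟨hpn, hrest⟩ := Nat.find_spec hPpex
  have hpq : p ≤ q := Nat.find_le ⟨hqlt, le_refl _, w, by
    have hid : V.map (le_refl (.down qv : Bipath n m)) = LinearMap.id := V.map_id _
    exact congrArg (fun (f : V.V (.down qv) →ₗ[k] V.V (.down qv)) => f w) hid⟩
  set pv : Fin m := ⟨p, hpn⟩ with hpv
  obtain ⟨hple, x₀, hx₀⟩ : ∃ (hle : (.down pv : Bipath n m) ≤ .down qv)
      (z : V.V (.down pv)), V.map hle z = w := hrest
  set J : Set (Bipath n m) := {v | (.down pv : Bipath n m) ≤ v ∧ v ≤ .down qv} with hJdef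
  have hqvJ : (.down qv : Bipath n m) ∈ J :=
    ⟨down_le_down.mpr (by rw [Fin.le_def]; show p ≤ q; exact hpq), le_refl _⟩
  have hJ : IsInterval J := by
    refine ⟨⟨.down qv, hqvJ⟩, ?_, ?_⟩
    · intro a b z ha hb haz hzb
      exact ⟨ha.1.trans haz, hzb.trans hb.2⟩
    · intro a ha b hb
      rcases down_le_cases ha.1 with hat | ⟨i, hai, hpi⟩
      · rw [hat] at ha
        exact absurd ha.2 not_top_le_down
      · rcases down_le_cases hb.1 with hbt | ⟨j, hbj, hpj⟩
        · rw [hbt] at hb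
          exact absurd hb.2 not_top_le_down
        · refine Relation.ReflTransGen.single ⟨ha, hb, ?_⟩
          rw [hai, hbj]
          rcases le_total i j with hij | hij
          · exact Or.inl (down_le_down.mpr hij)
          · exact Or.inr (down_le_down.mpr hij)
  have hdies : ∀ b : Bipath n m, b ∉ J → ∀ hle : (.down pv : Bipath n m) ≤ b,
      V.map hle x₀ = 0 := by
    intro b hbJ hle
    cases b with
    | bot => exact absurd hle not_down_le_bot
    | up j => exact absurd hle not_down_le_up
    | top => exact hB _
    | down j =>
      have hqj : ¬ (Bipath.down j : Bipath n m) ≤ .down qv := fun hc => hbJ ⟨hle, hc⟩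
      have hjq : q < j.1 := by
        by_contra hcon
        exact hqj (down_le_down.mpr (by rw [Fin.le_def]; show j.1 ≤ q; omega))
      exact hmax j hjq _
  have hSex : ∃ lam0 : V.V (.down qv) →ₗ[k] k, lam0 w = 1 ∧
      ∀ (i : Fin m) (hip : i.1 < p) (z : V.V (.down i)),
        lam0 (V.map (down_le_down.mpr (by rw [Fin.le_def]; show i.1 ≤ q; omega) :
          (Bipath.down i : Bipath n m) ≤ .down qv) z) = 0 := by
    by_cases hp0 : p = 0
    · obtain ⟨lam0, h1, _⟩ := exists_functional (⊥ : Submodule k (V.V (.down qv))) w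
        (by rw [Submodule.mem_bot]; exact hw)
      exact ⟨lam0, h1, fun i hip z => absurd hip (by omega)⟩
    · have hppn : p - 1 < m := by omega
      set predv : Bipath n m := .down ⟨p-1, hppn⟩ with hpredv
      have hprle : predv ≤ (.down qv : Bipath n m) :=
        down_le_down.mpr (by rw [Fin.le_def]; show p-1 ≤ q; omega)
      have hwnot : w ∉ LinearMap.range (V.map hprle) := by
        rintro ⟨z, hz⟩
        exact Nat.find_min hPpex (show p - 1 < p by omega) ⟨hppn, hprle, z, hz⟩
      obtain ⟨lam0, h1, h0⟩ := exists_functional _ w hwnot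
      refine ⟨lam0, h1, ?_⟩
      intro i hip z
      apply h0
      have hipred : (Bipath.down i : Bipath n m) ≤ predv :=
        down_le_down.mpr (by rw [Fin.le_def]; show i.1 ≤ p-1; omega)
      refine ⟨V.map hipred z, ?_⟩
      rw [← LinearMap.comp_apply, ← V.map_comp]
  obtain ⟨lam0, hlam1, hlam0⟩ := hSex
  apply summand_of_family V J hJ
    (fun v => if h : v ∈ J then V.map h.1 x₀ else 0)
    (fun v => if h : v ≤ (.down qv : Bipath n m) then lam0.comp (V.map h) else 0)
  · intro a ha b hb h
    rw [dif_pos ha, dif_pos hb, ← LinearMap.comp_apply, ← V.map_comp]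
  · intro a ha b hb h
    rw [dif_pos ha, ← LinearMap.comp_apply, ← V.map_comp]
    exact hdies b hb _
  · intro a ha b hb h
    rw [dif_pos ha.2, dif_pos hb.2]
    apply LinearMap.ext; intro z
    show lam0 (V.map hb.2 (V.map h z)) = lam0 (V.map ha.2 z)
    rw [← LinearMap.comp_apply (V.map hb.2), ← V.map_comp]
  · intro a ha b hb h
    rw [dif_pos hb.2]
    apply LinearMap.ext; intro z
    show lam0 (V.map hb.2 (V.map h z)) = 0
    rw [← LinearMap.comp_apply (V.map hb.2), ← V.map_comp]
    have hab : a ≤ (.down qv : Bipath n m) := h.trans hb.2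
    cases a with
    | top => exact absurd hab not_top_le_down
    | up j => exact absurd hab not_up_le_down
    | bot =>
      rw [hA z, map_zero, map_zero]
    | down i =>
      have hip : i.1 < p := by
        by_contra hcon
        exact ha ⟨down_le_down.mpr (by rw [Fin.le_def]; show p ≤ i.1; omega), hab⟩
      have := hlam0 i hip z
      convert this using 2
  · intro a ha
    rw [dif_pos ha.2, dif_pos ha]
    show lam0 (V.map ha.2 (V.map ha.1 x₀)) = 1
    rw [← LinearMap.comp_apply (V.map ha.2), ← V.map_comp]
    show lam0 (V.map hple x₀) = 1
    rw [hx₀]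
    exact hlam1

end MidCase2
section Main

open Bipath

variable {k : Type} [Field k] {n m : ℕ}

theorem exists_summand (hn : 0 < n) (hm : 0 < m) (V : PersMod k (Bipath n m))
    (hV : ∃ (a : Bipath n m) (x : V.V a), x ≠ 0) : HasSummand V := by
  classical
  by_cases hB : ∃ w : V.V .top, w ≠ 0
  · exact top_case hn hm V hB
  · push_neg at hB
    by_cases hA : ∃ x : V.V .bot, x ≠ 0
    · exact bot_case hn hm V hB hA
    · push_neg at hA
      by_cases hU : ∃ (i : Fin n) (x : V.V (.up i)), x ≠ 0
      · exact mid_up_case hn hm V hB hA hU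
      · by_cases hD : ∃ (i : Fin m) (x : V.V (.down i)), x ≠ 0
        · exact mid_down_case hn hm V hB hA hD
        · exfalso
          push_neg at hU hD
          obtain ⟨a, x, hx⟩ := hV
          cases a with
          | bot => exact hx (hA x)
          | top => exact hx (hB x)
          | up i => exact hx (hU i x)
          | down j => exact hx (hD j x)

theorem exists_decomp (hn : 0 < n) (hm : 0 < m) (V : PersMod k (Bipath n m)) :
    ∃ (ι : Type) (_ : Fintype ι) (Js : ι → {J : Set (Bipath n m) // IsInterval J}),
      PersMod.Iso V (PersMod.dsum fun i => intervalModule k (Js i).1 (Js i).2.2.1) := by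
  classical
  haveI : Fintype (Bipath n m) := Fintype.ofFinite _
  suffices h : ∀ (d : ℕ) (W : PersMod k (Bipath n m)), totalDim W ≤ d →
      ∃ (ι : Type) (_ : Fintype ι) (Js : ι → {J : Set (Bipath n m) // IsInterval J}),
        PersMod.Iso W (PersMod.dsum fun i => intervalModule k (Js i).1 (Js i).2.2.1) by
    exact h (totalDim V) V le_rfl
  intro d
  induction d using Nat.strong_induction_on with
  | _ d ih =>
    intro W hd
    by_cases hW : ∃ (a : Bipath n m) (x : W.V a), x ≠ 0
    · obtain ⟨J, hJ, i, r, hir⟩ := exists_summand hn hm W hW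
      have hiso1 := iso_prod_of_split i r hir
      obtain ⟨a₀, ha₀⟩ := hJ.1
      have hlt : totalDim (persKer r) < totalDim W :=
        totalDim_ker_lt r a₀ (ker_ne_top_of_split hir ha₀)
      obtain ⟨ι, hfin, Js, hiso2⟩ := ih (totalDim (persKer r)) (by omega) (persKer r) le_rfl
      haveI := hfin
      refine ⟨Option ι, inferInstance, fun o => o.elim ⟨J, hJ⟩ Js, ?_⟩
      have h3 := persIso_prod_right (M := intervalModule k J hJ.2.1) hiso2
      have h4 := persIso_prod_dsum_option (intervalModule k J hJ.2.1)
        (fun i => intervalModule k (Js i).1 (Js i).2.2.1)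
      have h5 : (fun o : Option ι => Option.elim o (intervalModule k J hJ.2.1)
          (fun i => intervalModule k (Js i).1 (Js i).2.2.1)) =
          (fun o : Option ι =>
            intervalModule k ((o.elim (⟨J, hJ⟩ : {J : Set (Bipath n m) // IsInterval J}) Js)).1
              ((o.elim (⟨J, hJ⟩ : {J : Set (Bipath n m) // IsInterval J}) Js)).2.2.1) := by
        funext o; cases o <;> rfl
      exact persIso_trans hiso1 (persIso_trans h3 (persIso_trans h4
        (persIso_of_eq (congrArg PersMod.dsum h5))))
    · push_neg at hW
      refine ⟨Empty, inferInstance, fun i => i.elim, ?_⟩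
      refine ⟨⟨fun a =>
        { toFun := fun x => fun i => i.elim
          map_add' := fun x y => by funext i; exact i.elim
          map_smul' := fun c x => by funext i; exact i.elim }, ?_⟩, ?_⟩
      · intro a b h
        apply LinearMap.ext; intro x
        funext i
        exact i.elim
      · intro a
        constructor
        · intro x y _
          rw [hW a x, hW a y]
        · intro g
          exact ⟨0, funext fun i => i.elim⟩

end Main

theorem statement2' (k : Type) [Field k] (n m : ℕ) (hn : 0 < n) (hm : 0 < m)
    (V : PersMod k (Bipath n m)) :
    ∃ mult : {J : Set (Bipath n m) // IsInterval J} → ℕ,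
      PersMod.Iso V
        (PersMod.dsum
          (fun p : Σ J : {J : Set (Bipath n m) // IsInterval J}, Fin (mult J) =>
            intervalModule k p.1.1 p.1.2.2.1)) := by
  classical
  obtain ⟨ι, hfin, Js, hiso⟩ := exists_decomp hn hm V
  haveI := hfin
  set mult : {J : Set (Bipath n m) // IsInterval J} → ℕ :=
    fun J => Nat.card {i : ι // Js i = J} with hmult
  refine ⟨mult, ?_⟩
  have eJ : ∀ J : {J : Set (Bipath n m) // IsInterval J}, {i : ι // Js i = J} ≃ Fin (mult J) :=
    fun J => Finite.equivFin _
  set efun : ι → (Σ J : {J : Set (Bipath n m) // IsInterval J}, Fin (mult J)) :=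
    fun i => ⟨Js i, eJ (Js i) ⟨i, rfl⟩⟩ with hefun
  have hinj : Function.Injective efun := by
    intro i i' hii
    have h1 := congrArg (fun p : (Σ J : {J : Set (Bipath n m) // IsInterval J}, Fin (mult J)) =>
      ((eJ p.1).symm p.2).1) hii
    have h2 : ∀ j, ((eJ (efun j).1).symm (efun j).2).1 = j := fun j => by
      show ((eJ (Js j)).symm (eJ (Js j) ⟨j, rfl⟩)).1 = j
      rw [Equiv.symm_apply_apply]
    exact (h2 i).symm.trans (h1.trans (h2 i'))
  have hsurj : Function.Surjective efun := by
    rintro ⟨J, c⟩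
    obtain ⟨⟨v, hv⟩, hc⟩ : ∃ s : {x : ι // Js x = J}, eJ J s = c :=
      ⟨(eJ J).symm c, (eJ J).apply_symm_apply c⟩
    subst hv
    refine ⟨v, ?_⟩
    show (⟨Js v, eJ (Js v) ⟨v, rfl⟩⟩ : Σ J' : {J : Set (Bipath n m) // IsInterval J},
      Fin (mult J')) = ⟨Js v, c⟩
    rw [← hc]
  set e := Equiv.ofBijective efun ⟨hinj, hsurj⟩ with he
  have hre := persIso_dsum_reindex e
    (fun p : Σ J : {J : Set (Bipath n m) // IsInterval J}, Fin (mult J) =>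
      intervalModule k p.1.1 p.1.2.2.1)
  exact persIso_trans hiso hre


/-- Every persistence module over a bipath poset `B_{n,m}` is
interval-decomposable: there are multiplicities `mult J` indexed by the intervals `J` of
`B_{n,m}` such that `V` is isomorphic to the direct sum over all intervals `J` of `mult J`
copies of the interval module `k_J`. -/
theorem statement2 (k : Type) [Field k] (n m : ℕ) (hn : 0 < n) (hm : 0 < m)
    (V : PersMod k (Bipath n m)) :
    ∃ mult : {J : Set (Bipath n m) // IsInterval J} → ℕ,
      PersMod.Iso V
        (PersMod.dsum
          (fun p : Σ J : {J : Set (Bipath n m) // IsInterval J}, Fin (mult J) =>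
            intervalModule k p.1.1 p.1.2.2.1)) := by
  exact statement2' k n m hn hm V
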